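/- arXiv:2510.02149 — 6 statements merged into one kernel-verified Lean document; each statement's English description precedes it below -/
import Mathlib

section
/- For positive definite matrices A, B ∈ ℝ^{d×d} with A ⪰ B (A - B positive semidefinite) and any vector x ∈ ℝ^d, we have ‖x‖_A ≤ ‖x‖_B · √(det(A)/det(B)), where ‖x‖_M = √(xᵀMx). -/
/-!
Congruence by `B ^ (-1/2)` reduces the claim to `B = 1`. If `1 ≤ C` in the Loewner order, every
eigenvalue of `C` is at least `1`, hence at most their product `det C`, so `C ≤ det C • 1`.
Conjugating back gives `A ≤ (det A / det B) • B`, and the inequality of quadratic forms follows.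
-/

open Matrix
open scoped MatrixOrder

namespace Matrix

variable {n : Type*} [Fintype n]

theorem dotProduct_mulVec_le_of_le {A B : Matrix n n ℝ} (h : A ≤ B) (x : n → ℝ) :
    x ⬝ᵥ A *ᵥ x ≤ x ⬝ᵥ B *ᵥ x := by
  have := (Matrix.le_iff.mp h).dotProduct_mulVec_nonneg x
  rw [star_trivial, sub_mulVec, dotProduct_sub] at this
  linarith

variable [DecidableEq n]

theorem le_det_smul_one_of_one_le {C : Matrix n n ℝ} (hC : 1 ≤ C) : C ≤ C.det • 1 := by
  have hCsa : IsSelfAdjoint C := by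
    simpa using (IsSelfAdjoint.of_nonneg (sub_nonneg.mpr hC)).add (IsSelfAdjoint.one _)
  have hHerm : C.IsHermitian := hCsa
  have hone_le : ∀ x ∈ spectrum ℝ C, 1 ≤ x :=
    (algebraMap_le_iff_le_spectrum hCsa).mp (by rwa [map_one])
  rw [← Algebra.algebraMap_eq_smul_one, le_algebraMap_iff_spectrum_le hCsa]
  rw [hHerm.spectrum_real_eq_range_eigenvalues] at hone_le ⊢
  rintro _ ⟨i, rfl⟩
  have hone_le' : ∀ j, 1 ≤ hHerm.eigenvalues j := fun j ↦ hone_le _ ⟨j, rfl⟩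
  rw [hHerm.det_eq_prod_eigenvalues]
  simpa using Finset.prod_le_prod_of_subset_of_one_le (Finset.subset_univ {i})
    (fun j _ ↦ zero_le_one.trans (hone_le' j)) (fun j _ _ ↦ hone_le' j)

theorem le_det_div_det_smul_of_le {A B : Matrix n n ℝ} (hB : B.PosDef) (hBA : B ≤ A) :
    A ≤ (A.det / B.det) • B := by
  obtain ⟨S, hSB⟩ : IsUnit (CFC.sqrt B) := hB.isStrictlyPositive.isUnit_cfcSqrt
  have hSsa : IsSelfAdjoint (S : Matrix n n ℝ) := hSB ▸ IsSelfAdjoint.of_nonneg (CFC.sqrt_nonneg B)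
  have hSS : (S : Matrix n n ℝ) * S = B := hSB ▸ CFC.sqrt_mul_sqrt_self B hB.posSemidef.nonneg
  set R : Matrix n n ℝ := ↑S⁻¹
  have hSR : (S : Matrix n n ℝ) * R = 1 := S.mul_inv
  have hRS : R * S = 1 := S.inv_mul
  set C := star R * A * R
  have hC : 1 ≤ C := by
    have hRBR : star R * B * R = 1 := by
      calc star R * B * R = star (S * R) * (S * R) := by
            rw [← hSS, star_mul, hSsa.star_eq]; simp only [mul_assoc]
        _ = 1 := by rw [hSR, star_one, one_mul]
    simpa [hRBR] using star_left_conjugate_le_conjugate hBA R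
  have hSCS : star (S : Matrix n n ℝ) * C * S = A := by
    calc star (S : Matrix n n ℝ) * C * S = star (R * S) * A * (R * S) := by
          rw [star_mul]; simp only [C, mul_assoc]
      _ = A := by rw [hRS, star_one, one_mul, mul_one]
  have hdetC : C.det = A.det / B.det := by
    have hdetSR := congrArg det hSR
    rw [det_mul, det_one] at hdetSR
    have hdetS : (S : Matrix n n ℝ).det ≠ 0 := left_ne_zero_of_mul_eq_one hdetSR
    rw [det_mul, det_mul, star_eq_conjTranspose, det_conjTranspose, star_trivial, ← hSS, det_mul,
      eq_div_iff (mul_ne_zero hdetS hdetS)]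
    linear_combination A.det * ((S : Matrix n n ℝ).det * R.det + 1) * hdetSR
  have h := star_left_conjugate_le_conjugate (le_det_smul_one_of_one_le hC) S
  rwa [hSCS, hdetC, mul_smul_comm, mul_one, smul_mul_assoc, hSsa.star_eq, hSS] at h

end Matrix

theorem stmt1_general {d : ℕ} (A B : Matrix (Fin d) (Fin d) ℝ)
    (hB : B.PosDef) (hAB : (A - B).PosSemidef) (x : Fin d → ℝ) :
    Real.sqrt (x ⬝ᵥ A.mulVec x) ≤
      Real.sqrt (x ⬝ᵥ B.mulVec x) * Real.sqrt (A.det / B.det) := by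
  have hquad := dotProduct_mulVec_le_of_le (le_det_div_det_smul_of_le hB hAB) x
  rw [smul_mulVec, dotProduct_smul, smul_eq_mul, mul_comm] at hquad
  have hBx : 0 ≤ x ⬝ᵥ B *ᵥ x := by simpa using hB.posSemidef.dotProduct_mulVec_nonneg x
  rw [← Real.sqrt_mul hBx]
  exact Real.sqrt_le_sqrt hquad

/-- For positive definite matrices A, B with A ⪰ B and any vector x,
‖x‖_A ≤ ‖x‖_B · √(det A / det B), where ‖x‖_M = √(xᵀ M x). -/
theorem stmt1 {d : ℕ} (A B : Matrix (Fin d) (Fin d) ℝ)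
    (hA : A.PosDef) (hB : B.PosDef) (hAB : (A - B).PosSemidef) (x : Fin d → ℝ) :
    Real.sqrt (x ⬝ᵥ A.mulVec x) ≤
      Real.sqrt (x ⬝ᵥ B.mulVec x) * Real.sqrt (A.det / B.det) :=
  stmt1_general A B hB hAB x
end

section
/- Let x₁,…,x_N ∈ ℝ^D and λ > 0, and define Λ = λI + Σ_{n=1}^N xₙxₙᵀ. Then Σ_{n=1}^N ‖xₙ‖²_{Λ⁻¹} ≤ D, where ‖x‖²_{Λ⁻¹} = xᵀΛ⁻¹x. -/
/-!
Since `∑ₙ xₙ xₙᵀ = Λ - λ I`, the left-hand side is the trace of `Λ⁻¹ (Λ - λ I)`, i.e.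
`D - λ tr Λ⁻¹`, and `tr Λ⁻¹ ≥ 0` because `Λ⁻¹` is positive definite.
-/

open Matrix

namespace Matrix

variable {n ι R : Type*} [Fintype n] [Fintype ι]

lemma trace_mul_vecMulVec_self [CommSemiring R] (M : Matrix n n R) (v : n → R) :
    (M * vecMulVec v v).trace = v ⬝ᵥ M *ᵥ v := by
  rw [mul_vecMulVec, trace_vecMulVec, dotProduct_comm]

lemma sum_dotProduct_inv_mulVec_eq [DecidableEq n] [CommRing R] {Λ : Matrix n n R}
    (hΛ : IsUnit Λ) (lam : R) (x : ι → n → R)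
    (h : Λ = lam • 1 + ∑ i, vecMulVec (x i) (x i)) :
    ∑ i, x i ⬝ᵥ Λ⁻¹ *ᵥ x i = Fintype.card n - lam * Λ⁻¹.trace := by
  have hsum : ∑ i, vecMulVec (x i) (x i) = Λ - lam • 1 := by
    rw [h, add_sub_cancel_left]
  calc ∑ i, x i ⬝ᵥ Λ⁻¹ *ᵥ x i
      = (Λ⁻¹ * ∑ i, vecMulVec (x i) (x i)).trace := by
        simp only [Finset.mul_sum, trace_sum, trace_mul_vecMulVec_self]
    _ = Fintype.card n - lam * Λ⁻¹.trace := by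
        rw [hsum, mul_sub, trace_sub, nonsing_inv_mul _ ((isUnit_iff_isUnit_det Λ).mp hΛ),
          mul_smul_comm, mul_one, trace_smul, trace_one, smul_eq_mul]

lemma posDef_smul_one_add_sum_vecMulVec_self [DecidableEq n] [CommRing R] [LinearOrder R]
    [IsStrictOrderedRing R] [StarRing R] [StarOrderedRing R] [TrivialStar R]
    {lam : R} (hlam : 0 < lam) (x : ι → n → R) :
    (lam • 1 + ∑ i, vecMulVec (x i) (x i)).PosDef :=
  (PosDef.one.smul hlam).add_posSemidef <| posSemidef_sum _ fun i _ => by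
    simpa only [star_trivial] using posSemidef_vecMulVec_self_star (x i)

end Matrix

/-- For x₁,…,x_N ∈ ℝ^D, λ > 0, and Λ = λI + Σₙ xₙxₙᵀ, we have
Σₙ ‖xₙ‖²_{Λ⁻¹} ≤ D. -/
theorem stmt2 {D N : ℕ} (x : Fin N → Fin D → ℝ) (lam : ℝ) (hlam : 0 < lam)
    (Λ : Matrix (Fin D) (Fin D) ℝ)
    (hΛ : Λ = lam • (1 : Matrix (Fin D) (Fin D) ℝ) + ∑ n, Matrix.vecMulVec (x n) (x n)) :
    ∑ n, x n ⬝ᵥ Λ⁻¹.mulVec (x n) ≤ (D : ℝ) := by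
  have hpos : Λ.PosDef := hΛ ▸ posDef_smul_one_add_sum_vecMulVec_self hlam x
  rw [sum_dotProduct_inv_mulVec_eq hpos.isUnit lam x hΛ, Fintype.card_fin]
  exact sub_le_self _ (mul_nonneg hlam.le hpos.inv.posSemidef.trace_nonneg)
end

section
/- Let (aᵢ), (bᵢ) be sequences in [0,1] with |aᵢ - bᵢ| ≤ ε for all i, where ε ∈ [0,1]. Write āᵢ = 1 - aᵢ and b̄ᵢ = 1 - bᵢ. Then for every γ ∈ (0,1), Σ_{k=1}^∞ γᵏ |(∏_{i=1}^{k-1} b̄ᵢ)·b_k − (∏_{i=1}^{k-1} āᵢ)·a_k| ≤ 2ε/(1-γ). -/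
/-! With `Pₖ = ∏_{i<k} (1 - bᵢ)`, `Qₖ = ∏_{i<k} (1 - aᵢ)` and `dₖ = |Pₖ - Qₖ|`, the `k`-th term
`tₖ = |Pₖ bₖ - Qₖ aₖ|` and the next gap `dₖ₊₁ = |Pₖ (1 - bₖ) - Qₖ (1 - aₖ)|` split `dₖ` in the
proportions `bₖ : 1 - bₖ`, up to an error `ε` each, so `tₖ + dₖ₊₁ ≤ dₖ + 2ε`. Since `d₀ = 0`,
summing this against the discount weights `γᵏ` telescopes to `∑ γᵏ tₖ ≤ 2ε / (1 - γ)`. -/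

open Finset

section DiscountedTelescoping

variable {t d : ℕ → ℝ} {γ c : ℝ}

lemma sum_range_pow_mul_add_pow_mul_le (hd : ∀ k, 0 ≤ d k) (hγ0 : 0 ≤ γ) (hγ1 : γ ≤ 1)
    (h : ∀ k, t k + d (k + 1) ≤ d k + c) (n : ℕ) :
    ∑ k ∈ range n, γ ^ k * t k + γ ^ n * d n ≤ d 0 + c * ∑ k ∈ range n, γ ^ k := by
  induction n with
  | zero => simp
  | succ n ih =>
    have hdiscount : γ ^ (n + 1) * d (n + 1) ≤ γ ^ n * d (n + 1) :=
      mul_le_mul_of_nonneg_right (pow_le_pow_of_le_one hγ0 hγ1 n.le_succ) (hd _)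
    have hstep : γ ^ n * (t n + d (n + 1)) ≤ γ ^ n * (d n + c) :=
      mul_le_mul_of_nonneg_left (h n) (pow_nonneg hγ0 n)
    rw [sum_range_succ, sum_range_succ]
    nlinarith

lemma tsum_pow_mul_le (ht : ∀ k, 0 ≤ t k) (hd : ∀ k, 0 ≤ d k) (hc : 0 ≤ c)
    (hγ0 : 0 ≤ γ) (hγ1 : γ < 1) (h : ∀ k, t k + d (k + 1) ≤ d k + c) :
    ∑' k, γ ^ k * t k ≤ d 0 + c / (1 - γ) := by
  refine Real.tsum_le_of_sum_range_le (fun k => mul_nonneg (pow_nonneg hγ0 k) (ht k)) fun n => ?_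
  have hgeom : ∑ k ∈ range n, γ ^ k ≤ 1 / (1 - γ) := by
    have := geom_sum_Ico_le_of_lt_one (m := 0) (n := n) hγ0 hγ1
    rwa [← range_eq_Ico, pow_zero] at this
  calc _ ≤ ∑ k ∈ range n, γ ^ k * t k + γ ^ n * d n :=
        le_add_of_nonneg_right (mul_nonneg (pow_nonneg hγ0 n) (hd n))
    _ ≤ d 0 + c * ∑ k ∈ range n, γ ^ k :=
        sum_range_pow_mul_add_pow_mul_le hd hγ0 hγ1.le h n
    _ ≤ d 0 + c / (1 - γ) := by
        rw [div_eq_mul_one_div]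
        gcongr

end DiscountedTelescoping

lemma abs_mul_add_abs_one_sub_mul_le {x p a b : ℝ} (hp0 : 0 ≤ p) (hp1 : p ≤ 1)
    (hb0 : 0 ≤ b) (hb1 : b ≤ 1) :
    |x * b + p * (b - a)| + |x * (1 - b) - p * (b - a)| ≤ |x| + 2 * |b - a| := by
  have hp : |p * (b - a)| ≤ |b - a| := by
    rw [abs_mul, abs_of_nonneg hp0]
    exact mul_le_of_le_one_left (abs_nonneg _) hp1
  have h₁ : |x * b + p * (b - a)| ≤ |x| * b + |b - a| := by
    calc _ ≤ |x * b| + |p * (b - a)| := abs_add_le _ _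
      _ ≤ |x| * b + |b - a| := by rw [abs_mul, abs_of_nonneg hb0]; linarith
  have h₂ : |x * (1 - b) - p * (b - a)| ≤ |x| * (1 - b) + |b - a| := by
    calc _ ≤ |x * (1 - b)| + |p * (b - a)| := abs_sub _ _
      _ ≤ |x| * (1 - b) + |b - a| := by
        rw [abs_mul, abs_of_nonneg (sub_nonneg.2 hb1)]; linarith
  linarith

lemma prod_range_one_sub_mem_Icc {a : ℕ → ℝ} (ha : ∀ i, a i ∈ Set.Icc (0 : ℝ) 1) (k : ℕ) :
    ∏ i ∈ range k, (1 - a i) ∈ Set.Icc (0 : ℝ) 1 :=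
  ⟨prod_nonneg fun i _ => sub_nonneg.2 (ha i).2,
    prod_le_one (fun i _ => sub_nonneg.2 (ha i).2) fun i _ => sub_le_self _ (ha i).1⟩

lemma abs_prod_mul_sub_add_abs_prod_sub_le {a b : ℕ → ℝ} {ε : ℝ}
    (ha : ∀ i, a i ∈ Set.Icc (0 : ℝ) 1) (hb : ∀ i, b i ∈ Set.Icc (0 : ℝ) 1)
    (hab : ∀ i, |a i - b i| ≤ ε) (k : ℕ) :
    |(∏ i ∈ range k, (1 - b i)) * b k - (∏ i ∈ range k, (1 - a i)) * a k|
        + |∏ i ∈ range (k + 1), (1 - b i) - ∏ i ∈ range (k + 1), (1 - a i)|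
      ≤ |∏ i ∈ range k, (1 - b i) - ∏ i ∈ range k, (1 - a i)| + 2 * ε := by
  set P := ∏ i ∈ range k, (1 - b i)
  set Q := ∏ i ∈ range k, (1 - a i)
  have hQ := prod_range_one_sub_mem_Icc ha k
  have hsplit := abs_mul_add_abs_one_sub_mul_le (x := P - Q) (a := a k) hQ.1 hQ.2 (hb k).1 (hb k).2
  have hterm : P * b k - Q * a k = (P - Q) * b k + Q * (b k - a k) := by ring
  have hnext : ∏ i ∈ range (k + 1), (1 - b i) - ∏ i ∈ range (k + 1), (1 - a i)
      = (P - Q) * (1 - b k) - Q * (b k - a k) := by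
    rw [prod_range_succ, prod_range_succ]; ring
  rw [hterm, hnext]
  linarith [abs_sub_comm (a k) (b k) ▸ hab k]

theorem stmt4_general (a b : ℕ → ℝ) (ε γ : ℝ)
    (hγ : γ ∈ Set.Ioo (0:ℝ) 1)
    (ha : ∀ i, a i ∈ Set.Icc (0:ℝ) 1) (hb : ∀ i, b i ∈ Set.Icc (0:ℝ) 1)
    (hab : ∀ i, |a i - b i| ≤ ε) :
    ∑' k : ℕ, γ ^ (k + 1) *
        |(∏ i ∈ Finset.range k, (1 - b i)) * b k - (∏ i ∈ Finset.range k, (1 - a i)) * a k|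
      ≤ 2 * ε / (1 - γ) := by
  obtain ⟨hγ0, hγ1⟩ := hγ
  have hε : 0 ≤ ε := (abs_nonneg _).trans (hab 0)
  have hdiscounted := tsum_pow_mul_le
    (t := fun k => |(∏ i ∈ range k, (1 - b i)) * b k - (∏ i ∈ range k, (1 - a i)) * a k|)
    (d := fun k => |∏ i ∈ range k, (1 - b i) - ∏ i ∈ range k, (1 - a i)|)
    (fun _ => abs_nonneg _) (fun _ => abs_nonneg _)
    (mul_nonneg zero_le_two hε) hγ0.le hγ1 (abs_prod_mul_sub_add_abs_prod_sub_le ha hb hab)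
  simp only [range_zero, prod_empty, sub_self, abs_zero, zero_add] at hdiscounted
  simp_rw [pow_succ', mul_assoc]
  rw [tsum_mul_left]
  calc _ ≤ γ * (2 * ε / (1 - γ)) := mul_le_mul_of_nonneg_left hdiscounted hγ0.le
    _ ≤ 2 * ε / (1 - γ) := mul_le_of_le_one_left (div_nonneg (by positivity) (by linarith)) hγ1.le

/-- For sequences (aᵢ), (bᵢ) in [0,1] with |aᵢ - bᵢ| ≤ ε (ε ∈ [0,1]),
with āᵢ = 1 - aᵢ, b̄ᵢ = 1 - bᵢ, for every γ ∈ (0,1):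
Σ_{k=1}^∞ γᵏ |(∏_{i<k} b̄ᵢ)·b_k − (∏_{i<k} āᵢ)·a_k| ≤ 2ε/(1-γ). -/
theorem stmt4 (a b : ℕ → ℝ) (ε γ : ℝ) (hε : ε ∈ Set.Icc (0:ℝ) 1)
    (hγ : γ ∈ Set.Ioo (0:ℝ) 1)
    (ha : ∀ i, a i ∈ Set.Icc (0:ℝ) 1) (hb : ∀ i, b i ∈ Set.Icc (0:ℝ) 1)
    (hab : ∀ i, |a i - b i| ≤ ε) :
    ∑' k : ℕ, γ ^ (k + 1) *
        |(∏ i ∈ Finset.range k, (1 - b i)) * b k - (∏ i ∈ Finset.range k, (1 - a i)) * a k|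
      ≤ 2 * ε / (1 - γ) :=
  stmt4_general a b ε γ hγ ha hb hab
end

section
/- Suppose for each a in a finite set 𝒜 we have matrices M_a, M̂_a ∈ ℝ^{d×d} with ‖M̂_a − M_a‖₂ ≤ ε (spectral norm) and ‖∏_{i=1}^k M_{a_i}‖₂ ≤ √d for every finite word a₁,…,a_k ∈ 𝒜. Then for every n and a₁,…,aₙ ∈ 𝒜, ‖∏_{i=1}^n M̂_{a_i}‖₂ ≤ √d·(1+ε√d)ⁿ. -/
/-!
Write each estimate as `M̂ₐ = Mₐ + Δₐ` with `‖Δₐ‖ ≤ ε`. Peeling off the first letter of the word,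
`U · M̂ₐ · R = U · Δₐ · R + (U · Mₐ) · R`, where `U` is a product of true matrices. The second term
has again a product of true matrices in front, so an induction on the word that keeps an arbitrary
true prefix `U` bounds both terms by the induction hypothesis, using `‖U‖ ≤ √d`:
the bound grows by the factor `1 + ε√d` per letter.
-/

open Matrix

/-- Spectral (ℓ²-operator) norm of a real square matrix. -/
noncomputable def specNorm {d : ℕ} (M : Matrix (Fin d) (Fin d) ℝ) : ℝ :=
  ‖Matrix.toEuclideanCLM (𝕜 := ℝ) M‖

section Perturbation

variable {R A : Type*} [SeminormedRing R] {f g : A → R} {C ε : ℝ}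

theorem norm_prod_map_mul_prod_map_le (hf : ∀ u : List A, ‖(u.map f).prod‖ ≤ C)
    (hgf : ∀ a, ‖g a - f a‖ ≤ ε) (l u : List A) :
    ‖(u.map f).prod * (l.map g).prod‖ ≤ C * (1 + ε * C) ^ l.length := by
  induction l generalizing u with
  | nil => simpa using hf u
  | cons a l ih =>
    set T := (l.map g).prod
    have hC : 0 ≤ C := (norm_nonneg _).trans (hf [])
    have hε : 0 ≤ ε := (norm_nonneg _).trans (hgf a)
    have hT : ‖T‖ ≤ C * (1 + ε * C) ^ l.length := by simpa using ih []
    have hsplit : (u.map f).prod * (g a * T) =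
        (u.map f).prod * (g a - f a) * T + ((u ++ [a]).map f).prod * T := by
      simp only [List.map_append, List.map_cons, List.map_nil, List.prod_append,
        List.prod_cons, List.prod_nil, mul_one]
      noncomm_ring
    have hdefect : ‖(u.map f).prod * (g a - f a) * T‖ ≤ C * ε * (C * (1 + ε * C) ^ l.length) :=
      calc ‖(u.map f).prod * (g a - f a) * T‖
          ≤ ‖(u.map f).prod‖ * ‖g a - f a‖ * ‖T‖ := norm_mul₃_le
        _ ≤ C * ε * (C * (1 + ε * C) ^ l.length) := by
          gcongr
          · exact hf u
          · exact hgf a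
    calc ‖(u.map f).prod * ((a :: l).map g).prod‖
        = ‖(u.map f).prod * (g a - f a) * T + ((u ++ [a]).map f).prod * T‖ := by
          rw [List.map_cons, List.prod_cons, hsplit]
      _ ≤ C * ε * (C * (1 + ε * C) ^ l.length) + C * (1 + ε * C) ^ l.length :=
          (norm_add_le _ _).trans (add_le_add hdefect (ih (u ++ [a])))
      _ = C * (1 + ε * C) ^ (a :: l).length := by
          rw [List.length_cons, pow_succ]
          ring

theorem norm_prod_map_le_of_uniform_bound (hf : ∀ u : List A, ‖(u.map f).prod‖ ≤ C)
    (hgf : ∀ a, ‖g a - f a‖ ≤ ε) (l : List A) :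
    ‖(l.map g).prod‖ ≤ C * (1 + ε * C) ^ l.length := by
  simpa using norm_prod_map_mul_prod_map_le hf hgf l []

end Perturbation

theorem specNorm_prod_ofFn {d k : ℕ} {A : Type*} (N : A → Matrix (Fin d) (Fin d) ℝ)
    (w : Fin k → A) :
    specNorm ((List.ofFn fun i => N (w i)).prod) =
      ‖((List.ofFn w).map fun a => toEuclideanCLM (𝕜 := ℝ) (N a)).prod‖ := by
  rw [specNorm, map_list_prod, List.map_ofFn, List.map_ofFn]
  rfl

theorem stmt5_general {d : ℕ} {A : Type*}
    (M Mh : A → Matrix (Fin d) (Fin d) ℝ) (ε : ℝ)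
    (hest : ∀ a, specNorm (Mh a - M a) ≤ ε)
    (hprod : ∀ (k : ℕ) (w : Fin k → A),
      specNorm ((List.ofFn fun i => M (w i)).prod) ≤ Real.sqrt d)
    (n : ℕ) (w : Fin n → A) :
    specNorm ((List.ofFn fun i => Mh (w i)).prod) ≤
      Real.sqrt d * (1 + ε * Real.sqrt d) ^ n := by
  have hM : ∀ u : List A,
      ‖(u.map fun a => toEuclideanCLM (𝕜 := ℝ) (M a)).prod‖ ≤ Real.sqrt d := fun u => by
    simpa only [specNorm_prod_ofFn, List.ofFn_get] using hprod u.length u.get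
  have hMh : ∀ a, ‖toEuclideanCLM (𝕜 := ℝ) (Mh a) - toEuclideanCLM (𝕜 := ℝ) (M a)‖ ≤ ε :=
    fun a => by simpa only [specNorm, map_sub] using hest a
  simpa only [specNorm_prod_ofFn, List.length_ofFn] using
    norm_prod_map_le_of_uniform_bound hM hMh (List.ofFn w)

/-- If ‖M̂_a − M_a‖₂ ≤ ε for all a, and every finite product of the true
matrices has spectral norm ≤ √d, then every n-fold product of the estimates satisfies
‖∏ M̂_{a_i}‖₂ ≤ √d·(1+ε√d)ⁿ. -/
theorem stmt5 {d : ℕ} {A : Type*} [Fintype A]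
    (M Mh : A → Matrix (Fin d) (Fin d) ℝ) (ε : ℝ)
    (hest : ∀ a, specNorm (Mh a - M a) ≤ ε)
    (hprod : ∀ (k : ℕ) (w : Fin k → A),
      specNorm ((List.ofFn fun i => M (w i)).prod) ≤ Real.sqrt d)
    (n : ℕ) (w : Fin n → A) :
    specNorm ((List.ofFn fun i => Mh (w i)).prod) ≤
      Real.sqrt d * (1 + ε * Real.sqrt d) ^ n :=
  stmt5_general M Mh ε hest hprod n w
end

section
/- Under the same hypotheses (‖M̂_a − M_a‖₂ ≤ ε, all finite products of the M_a bounded in spectral norm by √d), for every n and a₁,…,aₙ: ‖∏_{i=1}^n M̂_{a_i} − ∏_{i=1}^n M_{a_i}‖₂ ≤ d·(1+ε√d)^{n−1}·nε. -/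
/-!
Write `x = ε√d`. Peeling off the first letter splits `P·(∏ M̂ - ∏ M)`, for a product `P` of true
matrices, into `P·(M̂_a - M_a)·∏ M̂` plus `(P·M_a)·(∏ M̂ - ∏ M)` over the rest of the word. Since
`P·M_a` is again a product of true matrices, induction on the word gives the bound
`√d·((1 + x)^n - 1)` uniformly in `P`; taking `P = 1` also bounds `‖∏ M̂‖ ≤ √d·(1 + x)^n`, which
feeds the induction. Finally `(1 + x)^n - 1 = x·∑_{i<n} (1 + x)^i ≤ n·x·(1 + x)^(n-1)`.
-/

open Matrix

-- Under this instance `specNorm M` is definitionally `‖M‖` (`Matrix.cstar_norm_def`).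
open scoped Matrix.Norms.L2Operator

lemma one_add_pow_sub_one_le {x : ℝ} (hx : 0 ≤ x) (n : ℕ) :
    (1 + x) ^ n - 1 ≤ n * x * (1 + x) ^ (n - 1) := by
  have hsum : ∑ i ∈ Finset.range n, (1 + x) ^ i ≤ n * (1 + x) ^ (n - 1) := by
    simpa using Finset.sum_le_card_nsmul (Finset.range n) _ _ fun i hi =>
      pow_le_pow_right₀ (le_add_of_nonneg_right hx) (Nat.le_sub_one_of_lt (Finset.mem_range.1 hi))
  calc (1 + x) ^ n - 1 = (∑ i ∈ Finset.range n, (1 + x) ^ i) * x := by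
        rw [← geom_sum_mul, add_sub_cancel_left]
    _ ≤ n * (1 + x) ^ (n - 1) * x := mul_le_mul_of_nonneg_right hsum hx
    _ = n * x * (1 + x) ^ (n - 1) := by ring

section NormedRing

variable {R A : Type*} [NormedRing R] {f g : A → R} {ε C : ℝ}

lemma norm_prod_map_mul_sub_le (hfg : ∀ a, ‖g a - f a‖ ≤ ε)
    (hf : ∀ l : List A, ‖(l.map f).prod‖ ≤ C) (l p : List A) :
    ‖(p.map f).prod * ((l.map g).prod - (l.map f).prod)‖ ≤ C * ((1 + ε * C) ^ l.length - 1) := by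
  induction l generalizing p with
  | nil => simp
  | cons a l ih =>
    have hε : 0 ≤ ε := (norm_nonneg _).trans (hfg a)
    have hC : 0 ≤ C := (norm_nonneg _).trans (hf [])
    have hg : ‖(l.map g).prod‖ ≤ C * (1 + ε * C) ^ l.length := by
      have := ih []
      simp only [List.map_nil, List.prod_nil, one_mul] at this
      calc ‖(l.map g).prod‖ ≤ ‖(l.map g).prod - (l.map f).prod‖ + ‖(l.map f).prod‖ :=
            norm_le_norm_sub_add _ _
        _ ≤ C * ((1 + ε * C) ^ l.length - 1) + C := add_le_add this (hf l)
        _ = C * (1 + ε * C) ^ l.length := by ring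
    have hsplit : (p.map f).prod * (((a :: l).map g).prod - ((a :: l).map f).prod) =
        (p.map f).prod * (g a - f a) * (l.map g).prod +
          ((p ++ [a]).map f).prod * ((l.map g).prod - (l.map f).prod) := by
      simp only [List.map_cons, List.prod_cons, List.map_append, List.prod_append,
        List.map_nil, List.prod_nil, mul_one]
      noncomm_ring
    calc _ = ‖(p.map f).prod * (g a - f a) * (l.map g).prod +
          ((p ++ [a]).map f).prod * ((l.map g).prod - (l.map f).prod)‖ := by rw [hsplit]
      _ ≤ ‖(p.map f).prod‖ * ‖g a - f a‖ * ‖(l.map g).prod‖ +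
          C * ((1 + ε * C) ^ l.length - 1) :=
        (norm_add_le _ _).trans (add_le_add (norm_mul₃_le ..) (ih _))
      _ ≤ C * ε * (C * (1 + ε * C) ^ l.length) + C * ((1 + ε * C) ^ l.length - 1) := by
        gcongr
        exacts [hf p, hfg a]
      _ = C * ((1 + ε * C) ^ (a :: l).length - 1) := by
        rw [List.length_cons, pow_succ]
        ring

lemma norm_prod_map_sub_prod_map_le (hfg : ∀ a, ‖g a - f a‖ ≤ ε)
    (hf : ∀ l : List A, ‖(l.map f).prod‖ ≤ C) (l : List A) :
    ‖(l.map g).prod - (l.map f).prod‖ ≤ C ^ 2 * l.length * ε * (1 + ε * C) ^ (l.length - 1) := by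
  cases l with
  | nil => simp
  | cons a l =>
    have hε : 0 ≤ ε := (norm_nonneg _).trans (hfg a)
    have hC : 0 ≤ C := (norm_nonneg _).trans (hf [])
    calc _ ≤ C * ((1 + ε * C) ^ (a :: l).length - 1) := by
          simpa using norm_prod_map_mul_sub_le hfg hf (a :: l) []
      _ ≤ C * ((a :: l).length * (ε * C) * (1 + ε * C) ^ ((a :: l).length - 1)) :=
          mul_le_mul_of_nonneg_left (one_add_pow_sub_one_le (mul_nonneg hε hC) _) hC
      _ = _ := by ring

end NormedRing

theorem stmt6_general {d : ℕ} {A : Type*}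
    (M Mh : A → Matrix (Fin d) (Fin d) ℝ) (ε : ℝ)
    (hest : ∀ a, specNorm (Mh a - M a) ≤ ε)
    (hprod : ∀ (k : ℕ) (w : Fin k → A),
      specNorm ((List.ofFn fun i => M (w i)).prod) ≤ Real.sqrt d)
    (n : ℕ) (w : Fin n → A) :
    specNorm ((List.ofFn fun i => Mh (w i)).prod - (List.ofFn fun i => M (w i)).prod) ≤
      d * (1 + ε * Real.sqrt d) ^ (n - 1) * n * ε := by
  have hM (l : List A) : specNorm (l.map M).prod ≤ Real.sqrt d := by
    simpa [List.ofFn_getElem_eq_map] using hprod l.length (l[·])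
  have key := norm_prod_map_sub_prod_map_le (f := M) (g := Mh) hest hM (List.ofFn w)
  rw [Real.sq_sqrt d.cast_nonneg, List.length_ofFn, List.map_ofFn, List.map_ofFn] at key
  calc _ = ‖(List.ofFn (Mh ∘ w)).prod - (List.ofFn (M ∘ w)).prod‖ := rfl
    _ ≤ _ := key.trans_eq (by ring)

/-- If ‖M̂_a − M_a‖₂ ≤ ε for all a, and every finite product of the true
matrices has spectral norm ≤ √d, then
‖∏_{i=1}^n M̂_{a_i} − ∏_{i=1}^n M_{a_i}‖₂ ≤ d·(1+ε√d)^{n−1}·nε. -/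
theorem stmt6 {d : ℕ} {A : Type*} [Fintype A]
    (M Mh : A → Matrix (Fin d) (Fin d) ℝ) (ε : ℝ)
    (hest : ∀ a, specNorm (Mh a - M a) ≤ ε)
    (hprod : ∀ (k : ℕ) (w : Fin k → A),
      specNorm ((List.ofFn fun i => M (w i)).prod) ≤ Real.sqrt d)
    (n : ℕ) (w : Fin n → A) :
    specNorm ((List.ofFn fun i => Mh (w i)).prod - (List.ofFn fun i => M (w i)).prod) ≤
      d * (1 + ε * Real.sqrt d) ^ (n - 1) * n * ε :=
  stmt6_general M Mh ε hest hprod n w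
end

section
/- Let Λ₀ be a symmetric positive definite D×D matrix with λ_min(Λ₀) ≥ 1, and (xₙ) a sequence in ℝ^D with ‖xₙ‖₂ ≤ 1. Define Λ_N = Λ₀ + Σ_{n=1}^N xₙxₙᵀ. Then for all N, log(det(Λ_N)/det(Λ₀)) ≤ Σ_{n=1}^N ‖xₙ‖²_{Λ_{n-1}⁻¹} ≤ 2·log(det(Λ_N)/det(Λ₀)). -/
open Matrix

/-! Adding the rank-one term `xₙxₙᵀ` multiplies the determinant by `1 + uₙ`, where
`uₙ = ‖xₙ‖²_{Λₙ⁻¹}` (matrix determinant lemma), so `log (det Λ_N / det Λ₀) = ∑ log (1 + uₙ)`.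
Since `Λₙ ⪰ 1` and `‖xₙ‖ ≤ 1`, each `uₙ` lies in `[0, 1]`, where `t / 2 ≤ log (1 + t) ≤ t`. -/

namespace Matrix

variable {m : Type*} [DecidableEq m]

theorem PosDef.of_posSemidef_sub_one {A : Matrix m m ℝ} (hA : (A - 1).PosSemidef) : A.PosDef := by
  simpa using PosDef.posSemidef_add hA PosDef.one

variable [Fintype m]

theorem det_add_vecMulVec {α : Type*} [CommRing α] {A : Matrix m m α} (hA : IsUnit A.det)
    (u v : m → α) : (A + vecMulVec u v).det = A.det * (1 + v ⬝ᵥ A⁻¹ *ᵥ u) := by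
  rw [vecMulVec_eq Unit, det_add_replicateCol_mul_replicateRow hA, Matrix.mul_assoc,
    ← replicateCol_mulVec]
  congr 1
  rw [det_unique]
  rfl

theorem dotProduct_inv_mulVec_self_nonneg {A : Matrix m m ℝ} (hA : A.PosDef) (v : m → ℝ) :
    0 ≤ v ⬝ᵥ A⁻¹ *ᵥ v := by
  simpa using hA.inv.posSemidef.dotProduct_mulVec_nonneg v

theorem dotProduct_inv_mulVec_self_le {A : Matrix m m ℝ} (hA : (A - 1).PosSemidef) (v : m → ℝ) :
    v ⬝ᵥ A⁻¹ *ᵥ v ≤ v ⬝ᵥ v := by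
  set y := A⁻¹ *ᵥ v
  have hAy : A *ᵥ y = v := by
    rw [mulVec_mulVec, mul_nonsing_inv _ (PosDef.of_posSemidef_sub_one hA).det_pos.ne'.isUnit,
      one_mulVec]
  -- `y ⬝ y ≤ y ⬝ A y = v ⬝ y`, and `0 ≤ (v - y) ⬝ (v - y)` then gives `v ⬝ y ≤ v ⬝ v`.
  have hyy : y ⬝ᵥ y ≤ v ⬝ᵥ y := by
    have h := hA.dotProduct_mulVec_nonneg y
    rw [star_trivial, sub_mulVec, dotProduct_sub, one_mulVec, hAy, dotProduct_comm y v] at h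
    linarith
  have hdiff := dotProduct_self_star_nonneg (v - y)
  rw [star_trivial, sub_dotProduct, dotProduct_sub, dotProduct_sub, dotProduct_comm y v] at hdiff
  linarith

end Matrix

namespace Real

theorem half_le_log_one_add {t : ℝ} (h₀ : 0 ≤ t) (h₁ : t ≤ 1) : t / 2 ≤ log (1 + t) :=
  calc t / 2 ≤ 2 * t / (t + 2) := by rw [div_le_div_iff₀ two_pos (by linarith)]; nlinarith
    _ ≤ log (1 + t) := le_log_one_add_of_nonneg h₀

end Real

/-- elliptical potential lemma: For symmetric Λ₀ ⪰ I and vectors xₙ with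
‖xₙ‖₂ ≤ 1, with Λ_N = Λ₀ + Σ_{n<N} xₙxₙᵀ,
log(det Λ_N / det Λ₀) ≤ Σ_{n<N} ‖xₙ‖²_{Λ_n⁻¹} ≤ 2·log(det Λ_N / det Λ₀). -/
theorem stmt15 {D : ℕ} (Λ₀ : Matrix (Fin D) (Fin D) ℝ)
    (hΛ₀ : (Λ₀ - 1).PosSemidef)
    (x : ℕ → Fin D → ℝ) (hx : ∀ n, Real.sqrt (x n ⬝ᵥ x n) ≤ 1)
    (Λ : ℕ → Matrix (Fin D) (Fin D) ℝ)
    (hΛ : ∀ N, Λ N = Λ₀ + ∑ n ∈ Finset.range N, Matrix.vecMulVec (x n) (x n))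
    (N : ℕ) :
    Real.log ((Λ N).det / Λ₀.det) ≤
        ∑ n ∈ Finset.range N, x n ⬝ᵥ (Λ n)⁻¹.mulVec (x n) ∧
      ∑ n ∈ Finset.range N, x n ⬝ᵥ (Λ n)⁻¹.mulVec (x n) ≤
        2 * Real.log ((Λ N).det / Λ₀.det) := by
  have hΛ_zero : Λ 0 = Λ₀ := by simp [hΛ]
  have hΛ_succ (n : ℕ) : Λ (n + 1) = Λ n + vecMulVec (x n) (x n) := by
    rw [hΛ, hΛ, Finset.sum_range_succ, add_assoc]
  have hΛ_ge (n : ℕ) : (Λ n - 1).PosSemidef := by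
    rw [hΛ, add_sub_right_comm]
    exact hΛ₀.add <| posSemidef_sum _ fun k _ => by
      simpa using posSemidef_vecMulVec_self_star (x k)
  have hΛ_pd (n : ℕ) := PosDef.of_posSemidef_sub_one (hΛ_ge n)
  set u : ℕ → ℝ := fun n => x n ⬝ᵥ (Λ n)⁻¹ *ᵥ x n
  have hu₀ (n : ℕ) : 0 ≤ u n := dotProduct_inv_mulVec_self_nonneg (hΛ_pd n) (x n)
  have hu₁ (n : ℕ) : u n ≤ 1 :=
    (dotProduct_inv_mulVec_self_le (hΛ_ge n) (x n)).trans (Real.sqrt_le_one.mp (hx n))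
  have hratio : (Λ N).det / Λ₀.det = ∏ n ∈ Finset.range N, (1 + u n) := by
    refine (Finset.prod_range_induction _ (fun n => (Λ n).det / Λ₀.det) ?_ N fun n _ => ?_).symm
    · rw [hΛ_zero, div_self (hΛ_zero ▸ hΛ_pd 0).det_pos.ne']
    · rw [hΛ_succ, det_add_vecMulVec (hΛ_pd n).det_pos.ne'.isUnit, mul_div_right_comm]
  rw [hratio, Real.log_prod fun n _ => by linarith [hu₀ n], Finset.mul_sum]
  constructor
  · refine Finset.sum_le_sum fun n _ => ?_
    linarith [Real.log_le_sub_one_of_pos (by linarith [hu₀ n] : 0 < 1 + u n)]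
  · refine Finset.sum_le_sum fun n _ => ?_
    linarith [Real.half_le_log_one_add (hu₀ n) (hu₁ n)]
end
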